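/- arXiv:2309.13678 — 3 statements merged into one kernel-verified Lean document; each statement's English description precedes it below -/
import Mathlib

section
/- Let n₁, n₂, k₁, k₂ be nonnegative integers with k₁ ≤ n₁ and k₂ ≤ n₂, and set n = n₁ + n₂ and k = k₁ + k₂. Then E_k(n) ≤ E_{k₁}(n₁) + E_{k₂}(n₂); equivalently, D_k(n) ≥ D_{k₁}(n₁) + D_{k₂}(n₂). -/
/-- A (binary) decision tree over ground set `[n]` (positions `Fin n`):
leaves are labelled with a Boolean output, inner nodes with a query `i ∈ [n]`;
the left subtree corresponds to the answer `i ∉ A`, the right one to `i ∈ A`. -/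
inductive DecTree (n : ℕ) : Type
  | leaf : Bool → DecTree n
  | node : Fin n → DecTree n → DecTree n → DecTree n

namespace DecTree

/-- The height (depth) of a decision tree: the maximum number of queries on a
root-to-leaf path. -/
def depth {n : ℕ} : DecTree n → ℕ
  | leaf _ => 0
  | node _ t0 t1 => max (depth t0) (depth t1) + 1

/-- Evaluate a decision tree on an input set `A ⊆ [n]`. -/
def eval {n : ℕ} : DecTree n → Finset (Fin n) → Bool
  | leaf b, _ => b
  | node i t0 t1, A => if i ∈ A then eval t1 A else eval t0 A

end DecTree

/-- The slice: the `k`-element subsets of `[n]`. -/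
def Slice (n k : ℕ) : Type := {A : Finset (Fin n) // A.card = k}

/-- A decision tree computes `f` on the slice if it evaluates to `f A` for every
`A` in the slice. -/
def Computes {n k : ℕ} (T : DecTree n) (f : Slice n k → Bool) : Prop :=
  ∀ A : Slice n k, T.eval A.val = f A

/-- Deterministic query complexity of `f` on the slice: the minimum height of a
decision tree computing `f`. -/
noncomputable def Dquery (n k : ℕ) (f : Slice n k → Bool) : ℕ :=
  sInf {d : ℕ | ∃ T : DecTree n, T.depth ≤ d ∧ Computes T f}

/-- `Dmax n k`: the maximum deterministic query complexity over all Boolean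
functions on the slice of `k`-subsets of `[n]`. -/
noncomputable def Dmax (n k : ℕ) : ℕ :=
  sSup {d : ℕ | ∃ f : Slice n k → Bool, Dquery n k f = d}

/-- `Equery n k = n - Dmax n k`. -/
noncomputable def Equery (n k : ℕ) : ℕ := n - Dmax n k

/-!
Take `f₁`, `f₂` of maximal complexity on the two slices and let `g` be their XOR on
`[n₁ + n₂]`, each read off its own block. On the inputs of `g` that meet the first block in
exactly `k₁` points, `g` is the XOR of `f₁` and `f₂` evaluated on independent inputs with
disjoint supports. By induction on a decision tree for `g`, its depth is at least the sum of
the promise complexities of the two sides: a query falls in one block only, so it splits only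
that side's promise set, and the induction hypotheses for the two subtrees bound the halves. Pulling a tree on
`[n₁ + n₂]` back to a block does not increase depth, so these promise complexities are at
least `D(f₁)` and `D(f₂)`. The bound on `E` follows because `D_k(n) ≤ n`.
-/

namespace DecTree

variable {n : ℕ}

def queryAll : List (Fin n) → (Finset (Fin n) → Bool) → DecTree n
  | [], F => leaf (F ∅)
  | i :: l, F => node i (queryAll l F) (queryAll l fun A => F (insert i A))

theorem eval_queryAll (l : List (Fin n)) (F : Finset (Fin n) → Bool) (A : Finset (Fin n)) :
    (queryAll l F).eval A = F (A ∩ l.toFinset) := by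
  induction l generalizing F with
  | nil => simp [queryAll, eval]
  | cons i l ih =>
    by_cases hi : i ∈ A
    · simp [queryAll, eval, hi, ih, Finset.inter_insert_of_mem hi]
    · simp [queryAll, eval, hi, ih, Finset.inter_insert_of_notMem hi]

theorem depth_queryAll (l : List (Fin n)) (F : Finset (Fin n) → Bool) :
    (queryAll l F).depth = l.length := by
  induction l generalizing F with
  | nil => rfl
  | cons i l ih => simp [queryAll, depth, ih]

theorem exists_depth_le_eval_eq (F : Finset (Fin n) → Bool) :
    ∃ T : DecTree n, T.depth ≤ n ∧ ∀ A, T.eval A = F A :=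
  ⟨queryAll (List.finRange n) F, by simp [depth_queryAll], by simp [eval_queryAll]⟩

noncomputable def comap {m : ℕ} (e : Fin m ↪ Fin n) : DecTree n → DecTree m
  | leaf b => leaf b
  | node j t₀ t₁ =>
    open Classical in
    if h : ∃ a, e a = j then node h.choose (comap e t₀) (comap e t₁) else comap e t₀

theorem depth_comap_le {m : ℕ} (e : Fin m ↪ Fin n) (T : DecTree n) :
    (T.comap e).depth ≤ T.depth := by
  induction T with
  | leaf b => rfl
  | node j t₀ t₁ ih₀ ih₁ =>
    rw [comap]
    split_ifs <;> simp only [depth] <;> omega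

theorem eval_comap {m : ℕ} (e : Fin m ↪ Fin n) (T : DecTree n) (A : Finset (Fin m)) :
    (T.comap e).eval A = T.eval (A.map e) := by
  induction T with
  | leaf b => rfl
  | node j t₀ t₁ ih₀ ih₁ =>
    rw [comap]
    split_ifs with h
    · have hj : j ∈ A.map e ↔ h.choose ∈ A := by
        conv_lhs => rw [← h.choose_spec]
        exact Finset.mem_map' e
      simp only [eval, hj, ih₀, ih₁]
    · have hj : j ∉ A.map e := by
        intro hj
        obtain ⟨a, -, rfl⟩ := Finset.mem_map.mp hj
        exact h ⟨a, rfl⟩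
      simp [eval, hj, ih₀]

end DecTree

section QueryOn

variable {n : ℕ}

def ComputesOn (T : DecTree n) (P : Finset (Fin n) → Prop) (F : Finset (Fin n) → Bool) : Prop :=
  ∀ A, P A → T.eval A = F A

noncomputable def DqueryOn (P : Finset (Fin n) → Prop) (F : Finset (Fin n) → Bool) : ℕ :=
  sInf {d | ∃ T : DecTree n, T.depth ≤ d ∧ ComputesOn T P F}

theorem exists_depth_le_DqueryOn (P : Finset (Fin n) → Prop) (F : Finset (Fin n) → Bool) :
    ∃ T : DecTree n, T.depth ≤ DqueryOn P F ∧ ComputesOn T P F := by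
  obtain ⟨T, hT, hF⟩ := DecTree.exists_depth_le_eval_eq F
  exact Nat.sInf_mem (s := {d | ∃ T : DecTree n, T.depth ≤ d ∧ ComputesOn T P F})
    ⟨n, T, hT, fun A _ => hF A⟩

theorem DqueryOn_le {P : Finset (Fin n) → Prop} {F : Finset (Fin n) → Bool} {T : DecTree n}
    (hT : ComputesOn T P F) : DqueryOn P F ≤ T.depth :=
  Nat.sInf_le ⟨T, le_rfl, hT⟩

theorem DqueryOn_mono {P Q : Finset (Fin n) → Prop} (hPQ : ∀ A, P A → Q A)
    (F : Finset (Fin n) → Bool) : DqueryOn P F ≤ DqueryOn Q F := by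
  obtain ⟨T, hT, hQ⟩ := exists_depth_le_DqueryOn Q F
  exact (DqueryOn_le fun A hA => hQ A (hPQ A hA)).trans hT

theorem DqueryOn_eq_zero_of_forall_eq {P : Finset (Fin n) → Prop} {F : Finset (Fin n) → Bool}
    (b : Bool) (hF : ∀ A, P A → F A = b) : DqueryOn P F = 0 :=
  Nat.le_zero.mp <| DqueryOn_le (T := .leaf b) fun A hA => (hF A hA).symm

theorem DqueryOn_le_max_add_one (P : Finset (Fin n) → Prop) (F : Finset (Fin n) → Bool)
    (i : Fin n) :
    DqueryOn P F ≤
      max (DqueryOn (fun A => P A ∧ i ∉ A) F) (DqueryOn (fun A => P A ∧ i ∈ A) F) + 1 := by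
  obtain ⟨T₀, hT₀, hF₀⟩ := exists_depth_le_DqueryOn (fun A => P A ∧ i ∉ A) F
  obtain ⟨T₁, hT₁, hF₁⟩ := exists_depth_le_DqueryOn (fun A => P A ∧ i ∈ A) F
  refine (DqueryOn_le (T := .node i T₀ T₁) fun A hA => ?_).trans ?_
  · by_cases hi : i ∈ A
    · simp [DecTree.eval, hi, hF₁ A ⟨hA, hi⟩]
    · simp [DecTree.eval, hi, hF₀ A ⟨hA, hi⟩]
  · simp only [DecTree.depth]
    omega

theorem add_DqueryOn_le_of_query {P : Finset (Fin n) → Prop} {F : Finset (Fin n) → Bool}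
    {i : Fin n} {c d₀ d₁ : ℕ} (hP : ∃ A, P A)
    (h₀ : (∃ A, P A ∧ i ∉ A) → c + DqueryOn (fun A => P A ∧ i ∉ A) F ≤ d₀)
    (h₁ : (∃ A, P A ∧ i ∈ A) → c + DqueryOn (fun A => P A ∧ i ∈ A) F ≤ d₁) :
    c + DqueryOn P F ≤ max d₀ d₁ + 1 := by
  have hsplit := DqueryOn_le_max_add_one P F i
  by_cases hne₀ : ∃ A, P A ∧ i ∉ A <;> by_cases hne₁ : ∃ A, P A ∧ i ∈ A
  · have := h₀ hne₀
    have := h₁ hne₁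
    omega
  · have := h₀ hne₀
    have := DqueryOn_mono (Q := fun A => P A ∧ i ∉ A) (fun A hA => ⟨hA, fun h => hne₁ ⟨A, hA, h⟩⟩) F
    omega
  · have := h₁ hne₁
    have := DqueryOn_mono (Q := fun A => P A ∧ i ∈ A)
      (fun A hA => ⟨hA, not_not.mp fun h => hne₀ ⟨A, hA, h⟩⟩) F
    omega
  · obtain ⟨A, hA⟩ := hP
    by_cases h : i ∈ A
    exacts [absurd ⟨A, hA, h⟩ hne₁, absurd ⟨A, hA, h⟩ hne₀]

theorem DqueryOn_add_DqueryOn_le_depth (T : DecTree n) {P₁ P₂ : Finset (Fin n) → Prop}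
    {F₁ F₂ : Finset (Fin n) → Bool}
    (hsupp : ∀ i, (∀ A, P₁ A → i ∉ A) ∨ (∀ A, P₂ A → i ∉ A))
    (hP₁ : ∃ A, P₁ A) (hP₂ : ∃ A, P₂ A)
    (hT : ∀ A₁ A₂, P₁ A₁ → P₂ A₂ → T.eval (A₁ ∪ A₂) = xor (F₁ A₁) (F₂ A₂)) :
    DqueryOn P₁ F₁ + DqueryOn P₂ F₂ ≤ T.depth := by
  induction T generalizing P₁ P₂ F₁ F₂ with
  | leaf b =>
    obtain ⟨B₁, hB₁⟩ := hP₁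
    obtain ⟨B₂, hB₂⟩ := hP₂
    have h₁ : DqueryOn P₁ F₁ = 0 := DqueryOn_eq_zero_of_forall_eq (xor b (F₂ B₂)) fun A hA => by
      rw [show b = xor (F₁ A) (F₂ B₂) from hT A B₂ hA hB₂]
      simp
    have h₂ : DqueryOn P₂ F₂ = 0 := DqueryOn_eq_zero_of_forall_eq (xor (F₁ B₁) b) fun A hA => by
      rw [show b = xor (F₁ B₁) (F₂ A) from hT B₁ A hB₁ hA]
      simp
    simp [h₁, h₂]
  | node i t₀ t₁ ih₀ ih₁ =>
    -- `i` lies outside the support of one side, so the answer only splits the other side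
    wlog hi : ∀ A, P₁ A → i ∉ A generalizing P₁ P₂ F₁ F₂ with H
    · rw [add_comm]
      refine H (fun j => (hsupp j).symm) hP₂ hP₁ (fun A₂ A₁ h₂ h₁ => ?_) ((hsupp i).resolve_left hi)
      rw [Finset.union_comm, hT A₁ A₂ h₁ h₂, Bool.xor_comm]
    have hT' : ∀ A₁ A₂, P₁ A₁ → P₂ A₂ →
        (if i ∈ A₂ then t₁.eval (A₁ ∪ A₂) else t₀.eval (A₁ ∪ A₂)) = xor (F₁ A₁) (F₂ A₂) :=
      fun A₁ A₂ h₁ h₂ => by simpa [DecTree.eval, hi A₁ h₁] using hT A₁ A₂ h₁ h₂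
    have hsupp' {Q : Finset (Fin n) → Prop} (hQ : ∀ A, Q A → P₂ A) (j : Fin n) :
        (∀ A, P₁ A → j ∉ A) ∨ (∀ A, Q A → j ∉ A) :=
      (hsupp j).imp_right fun h A hA => h A (hQ A hA)
    have bound₀ (hne : ∃ A, P₂ A ∧ i ∉ A) :
        DqueryOn P₁ F₁ + DqueryOn (fun A => P₂ A ∧ i ∉ A) F₂ ≤ t₀.depth :=
      ih₀ (hsupp' fun _ => And.left) hP₁ hne fun A₁ A₂ h₁ h₂ => by
        simpa [h₂.2] using hT' A₁ A₂ h₁ h₂.1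
    have bound₁ (hne : ∃ A, P₂ A ∧ i ∈ A) :
        DqueryOn P₁ F₁ + DqueryOn (fun A => P₂ A ∧ i ∈ A) F₂ ≤ t₁.depth :=
      ih₁ (hsupp' fun _ => And.left) hP₁ hne fun A₁ A₂ h₁ h₂ => by
        simpa [h₂.2] using hT' A₁ A₂ h₁ h₂.1
    simpa only [DecTree.depth] using add_DqueryOn_le_of_query hP₂ bound₀ bound₁

end QueryOn

section Slice

variable {m n k : ℕ}

theorem Slice.nonempty (h : k ≤ n) : Nonempty (Slice n k) :=
  let ⟨B, _, hB⟩ := Finset.exists_subset_card_eq (s := Finset.univ) (by simpa using h)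
  ⟨⟨B, hB⟩⟩

def SliceImage (k : ℕ) (e : Fin m ↪ Fin n) (A : Finset (Fin n)) : Prop :=
  ∃ B : Slice m k, B.val.map e = A

theorem notMem_of_sliceImage {e : Fin m ↪ Fin n} {i : Fin n} (hi : i ∉ Set.range e)
    {A : Finset (Fin n)} (hA : SliceImage k e A) : i ∉ A := by
  obtain ⟨B, rfl⟩ := hA
  exact fun hiB => hi (Finset.coe_map_subset_range e B.val hiB)

noncomputable def extendAlong (e : Fin m ↪ Fin n) (f : Slice m k → Bool) (A : Finset (Fin n)) :
    Bool :=
  if h : (A.preimage e e.injective.injOn).card = k then f ⟨_, h⟩ else false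

theorem extendAlong_map (e : Fin m ↪ Fin n) (f : Slice m k → Bool) (B : Slice m k) :
    extendAlong e f (B.val.map e) = f B := by
  simp only [extendAlong, Finset.preimage_map, B.prop, ↓reduceDIte]
  rfl

theorem extendAlong_union_of_disjoint (e : Fin m ↪ Fin n) (f : Slice m k → Bool)
    (A : Finset (Fin n)) {C : Finset (Fin n)} (hC : Disjoint (C : Set (Fin n)) (Set.range e)) :
    extendAlong e f (A ∪ C) = extendAlong e f A := by
  have h : (A ∪ C).preimage e e.injective.injOn = A.preimage e e.injective.injOn := by
    ext a
    simp only [Finset.mem_preimage, Finset.mem_union]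
    exact or_iff_left fun ha => Set.disjoint_left.mp hC ha ⟨a, rfl⟩
  unfold extendAlong
  rw [h]

theorem exists_depth_le_computes (f : Slice n k → Bool) :
    ∃ T : DecTree n, T.depth ≤ n ∧ Computes T f := by
  obtain ⟨T, hT, hF⟩ :=
    DecTree.exists_depth_le_eval_eq fun A => if h : A.card = k then f ⟨A, h⟩ else false
  exact ⟨T, hT, fun A => by simp only [hF, A.prop, ↓reduceDIte]; rfl⟩

theorem exists_depth_le_Dquery (f : Slice n k → Bool) :
    ∃ T : DecTree n, T.depth ≤ Dquery n k f ∧ Computes T f :=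
  Nat.sInf_mem (s := {d | ∃ T : DecTree n, T.depth ≤ d ∧ Computes T f})
    ⟨n, exists_depth_le_computes f⟩

theorem Dquery_le (f : Slice n k → Bool) : Dquery n k f ≤ n :=
  Nat.sInf_le (exists_depth_le_computes f)

theorem Dquery_le_DqueryOn_sliceImage (e : Fin m ↪ Fin n) (f : Slice m k → Bool) :
    Dquery m k f ≤ DqueryOn (SliceImage k e) (extendAlong e f) := by
  obtain ⟨T, hT, hF⟩ := exists_depth_le_DqueryOn (SliceImage k e) (extendAlong e f)
  refine Nat.sInf_le ⟨T.comap e, (T.depth_comap_le e).trans hT, fun B => ?_⟩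
  rw [DecTree.eval_comap, hF _ ⟨B, rfl⟩, extendAlong_map]

theorem bddAbove_Dquery (n k : ℕ) : BddAbove {d | ∃ f : Slice n k → Bool, Dquery n k f = d} :=
  ⟨n, by rintro _ ⟨f, rfl⟩; exact Dquery_le f⟩

theorem Dquery_le_Dmax (f : Slice n k → Bool) : Dquery n k f ≤ Dmax n k :=
  le_csSup (bddAbove_Dquery n k) ⟨f, rfl⟩

theorem Dmax_le (n k : ℕ) : Dmax n k ≤ n :=
  csSup_le ⟨_, fun _ => false, rfl⟩ fun _ ⟨f, hf⟩ => hf ▸ Dquery_le f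

theorem exists_Dquery_eq_Dmax (n k : ℕ) : ∃ f : Slice n k → Bool, Dquery n k f = Dmax n k :=
  Nat.sSup_mem (s := {d | ∃ f : Slice n k → Bool, Dquery n k f = d}) ⟨_, fun _ => false, rfl⟩
    (bddAbove_Dquery n k)

end Slice

theorem Dquery_add_Dquery_le {n₁ n₂ n k₁ k₂ : ℕ} (e₁ : Fin n₁ ↪ Fin n) (e₂ : Fin n₂ ↪ Fin n)
    (he : Disjoint (Set.range e₁) (Set.range e₂)) (h₁ : k₁ ≤ n₁) (h₂ : k₂ ≤ n₂)
    (f₁ : Slice n₁ k₁ → Bool) (f₂ : Slice n₂ k₂ → Bool) :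
    Dquery n₁ k₁ f₁ + Dquery n₂ k₂ f₂ ≤
      Dquery n (k₁ + k₂) fun A => xor (extendAlong e₁ f₁ A.val) (extendAlong e₂ f₂ A.val) := by
  obtain ⟨T, hT, hg⟩ := exists_depth_le_Dquery
    fun A : Slice n (k₁ + k₂) => xor (extendAlong e₁ f₁ A.val) (extendAlong e₂ f₂ A.val)
  have hsupp (i : Fin n) :
      (∀ A, SliceImage k₁ e₁ A → i ∉ A) ∨ (∀ A, SliceImage k₂ e₂ A → i ∉ A) := by
    by_cases hi : i ∈ Set.range e₁
    · exact .inr fun _ => notMem_of_sliceImage (Set.disjoint_left.mp he hi)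
    · exact .inl fun _ => notMem_of_sliceImage hi
  have hunion : ∀ A₁ A₂, SliceImage k₁ e₁ A₁ → SliceImage k₂ e₂ A₂ →
      T.eval (A₁ ∪ A₂) = xor (extendAlong e₁ f₁ A₁) (extendAlong e₂ f₂ A₂) := by
    rintro _ _ ⟨B₁, rfl⟩ ⟨B₂, rfl⟩
    have hsub₁ := Finset.coe_map_subset_range e₁ B₁.val
    have hsub₂ := Finset.coe_map_subset_range e₂ B₂.val
    have hcard : (B₁.val.map e₁ ∪ B₂.val.map e₂).card = k₁ + k₂ := by
      rw [Finset.card_union_of_disjoint (Finset.disjoint_coe.mp (he.mono hsub₁ hsub₂)),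
        Finset.card_map, Finset.card_map, B₁.prop, B₂.prop]
    refine (hg ⟨_, hcard⟩).trans (congrArg₂ xor ?_ ?_)
    · exact extendAlong_union_of_disjoint _ _ _ (he.symm.mono_left hsub₂)
    · exact (congrArg _ (Finset.union_comm _ _)).trans
        (extendAlong_union_of_disjoint _ _ _ (he.mono_left hsub₁))
  obtain ⟨B₁⟩ := Slice.nonempty h₁
  obtain ⟨B₂⟩ := Slice.nonempty h₂
  calc Dquery n₁ k₁ f₁ + Dquery n₂ k₂ f₂
      ≤ DqueryOn (SliceImage k₁ e₁) (extendAlong e₁ f₁) +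
        DqueryOn (SliceImage k₂ e₂) (extendAlong e₂ f₂) :=
        add_le_add (Dquery_le_DqueryOn_sliceImage e₁ f₁) (Dquery_le_DqueryOn_sliceImage e₂ f₂)
    _ ≤ T.depth := DqueryOn_add_DqueryOn_le_depth T hsupp ⟨_, B₁, rfl⟩ ⟨_, B₂, rfl⟩ hunion
    _ ≤ _ := hT

theorem Dmax_add_Dmax_le {n₁ n₂ n k₁ k₂ : ℕ} (e₁ : Fin n₁ ↪ Fin n) (e₂ : Fin n₂ ↪ Fin n)
    (he : Disjoint (Set.range e₁) (Set.range e₂)) (h₁ : k₁ ≤ n₁) (h₂ : k₂ ≤ n₂) :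
    Dmax n₁ k₁ + Dmax n₂ k₂ ≤ Dmax n (k₁ + k₂) := by
  obtain ⟨f₁, hf₁⟩ := exists_Dquery_eq_Dmax n₁ k₁
  obtain ⟨f₂, hf₂⟩ := exists_Dquery_eq_Dmax n₂ k₂
  rw [← hf₁, ← hf₂]
  exact (Dquery_add_Dquery_le e₁ e₂ he h₁ h₂ f₁ f₂).trans (Dquery_le_Dmax _)

theorem Fin.disjoint_range_castAddEmb_natAddEmb (m n : ℕ) :
    Disjoint (Set.range (Fin.castAddEmb n : Fin m ↪ Fin (m + n)))
      (Set.range (Fin.natAddEmb m)) := by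
  rw [Set.disjoint_left]
  rintro _ ⟨a, rfl⟩ ⟨b, hb⟩
  have := congrArg Fin.val hb
  simp only [Fin.natAddEmb_apply, Fin.val_natAdd, Fin.coe_castAddEmb, Fin.val_castAdd] at this
  omega

/-- For `n = n₁ + n₂` and `k = k₁ + k₂` (with `kᵢ ≤ nᵢ`), one has
`E_k(n) ≤ E_{k₁}(n₁) + E_{k₂}(n₂)`, equivalently
`D_k(n) ≥ D_{k₁}(n₁) + D_{k₂}(n₂)`. -/
theorem stmt_3 (n₁ n₂ k₁ k₂ : ℕ) (h₁ : k₁ ≤ n₁) (h₂ : k₂ ≤ n₂) :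
    Equery (n₁ + n₂) (k₁ + k₂) ≤ Equery n₁ k₁ + Equery n₂ k₂ ∧
    Dmax n₁ k₁ + Dmax n₂ k₂ ≤ Dmax (n₁ + n₂) (k₁ + k₂) := by
  have hD : Dmax n₁ k₁ + Dmax n₂ k₂ ≤ Dmax (n₁ + n₂) (k₁ + k₂) :=
    Dmax_add_Dmax_le _ _ (Fin.disjoint_range_castAddEmb_natAddEmb n₁ n₂) h₁ h₂
  have hD₁ := Dmax_le n₁ k₁
  have hD₂ := Dmax_le n₂ k₂
  exact ⟨by unfold Equery; omega, hD⟩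
end

section
/- Let C(m) := binom(m, ⌊m/2⌋) denote the central binomial coefficient and define f(n,t) := [ (t+1)·C(n−t) + Σ_{ℓ=t+1}^{n} ( ℓ·log₂(ℓ)·C(n−ℓ) + 2·C(n−ℓ) ) ] / C(n). Then f(n,5) < 1 for all integers n ≥ 100. -/
/-!
The quantity `C(m) (m + 1) / 2 ^ m` is nondecreasing in `m`, so
`C(n - ℓ) / C(n) ≤ (n + 1) / ((n - ℓ + 1) 2 ^ ℓ)`. Together with the tangent-line bound
`log₂ x ≤ (3x + 26) / 16` this bounds every term of `f(n, 5)` by an explicit multiple of `2 ^ (-ℓ)`.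
For `ℓ ≤ 23` the weight `(n + 1) / (n - ℓ + 1)` is at most its value `101 / (101 - ℓ)` at `n = 100`,
and these finitely many terms add up to less than `0.775`; the term `6 C(n - 5)` contributes less
than `0.2`. For `ℓ ≥ 24` the weight is at most `ℓ + 1` and the terms are dominated by `(3/4) ^ ℓ`,
whose tail sum is below `0.005`.
-/

/-- The central binomial coefficient `C(m) = binom(m, ⌊m/2⌋)`, as a real number. -/
noncomputable def centralBinom (m : ℕ) : ℝ := (Nat.choose m (m / 2) : ℝ)

/-- The quantity `f(n,t)` from Lemma `kozep`. -/
noncomputable def fQuot (n t : ℕ) : ℝ :=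
  (((t : ℝ) + 1) * centralBinom (n - t) +
      ∑ ℓ ∈ Finset.Icc (t + 1) n,
        ((ℓ : ℝ) * Real.logb 2 ℓ * centralBinom (n - ℓ) + 2 * centralBinom (n - ℓ))) /
    centralBinom n

open Finset Real

lemma centralBinom_pos (m : ℕ) : 0 < centralBinom m :=
  Nat.cast_pos.mpr (Nat.choose_pos (Nat.div_le_self m 2))

/-- An equality for even `m`; for odd `m`, `C(m + 1) = 2 C(m)`. -/
lemma two_mul_choose_half_mul_le (m : ℕ) :
    2 * m.choose (m / 2) * (m + 1) ≤ (m + 1).choose ((m + 1) / 2) * (m + 2) := by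
  rcases Nat.even_or_odd' m with ⟨k, rfl | rfl⟩
  · have h := Nat.add_one_mul_choose_eq (2 * k) k
    rw [Nat.choose_symm_half] at h
    rw [show 2 * k / 2 = k by omega, show (2 * k + 1) / 2 = k by omega]
    nlinarith
  · rw [show (2 * k + 1) / 2 = k by omega, show (2 * k + 1 + 1) / 2 = k + 1 by omega,
      Nat.choose_succ_succ, Nat.choose_symm_half]
    nlinarith

lemma centralBinom_mul_two_pow_le (m ℓ : ℕ) :
    centralBinom m * (m + 1) * 2 ^ ℓ ≤ centralBinom (m + ℓ) * (m + ℓ + 1) := by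
  induction ℓ with
  | zero => simp
  | succ ℓ ih =>
    have step : 2 * centralBinom (m + ℓ) * (m + ℓ + 1) ≤
        centralBinom (m + ℓ + 1) * (m + ℓ + 2) := by
      simp only [centralBinom]
      exact_mod_cast two_mul_choose_half_mul_le (m + ℓ)
    push_cast [← add_assoc]
    rw [pow_succ]
    nlinarith

lemma centralBinom_sub_le {n ℓ : ℕ} {K : ℝ} (hℓ : ℓ ≤ n)
    (hK : (n : ℝ) + 1 ≤ K * (n - ℓ + 1)) :
    centralBinom (n - ℓ) ≤ K / 2 ^ ℓ * centralBinom n := by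
  obtain ⟨m, rfl⟩ := Nat.exists_eq_add_of_le' hℓ
  have h := centralBinom_mul_two_pow_le m ℓ
  rw [Nat.add_sub_cancel, div_mul_eq_mul_div, le_div_iff₀ (by positivity)]
  push_cast at hK
  have hC := centralBinom_pos (m + ℓ)
  nlinarith [centralBinom_pos m]

/-- The tangent line of `log` at `8`, using `2 / 3 < log 2 < 8 / 11`. -/
lemma logb_two_le (x : ℝ) (hx : 0 < x) : logb 2 x ≤ (3 * x + 26) / 16 := by
  have h8 : log (x / 8) ≤ x / 8 - 1 := log_le_sub_one_of_pos (by positivity)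
  have hlog8 : log 8 = 3 * log 2 := by
    rw [show (8 : ℝ) = 2 ^ 3 by norm_num, log_pow]; norm_num
  rw [log_div hx.ne' (by norm_num), hlog8] at h8
  have h1 := log_two_gt_d9
  have h2 := log_two_lt_d9
  rw [logb, div_le_iff₀ (log_pos one_lt_two)]
  nlinarith [mul_nonneg hx.le (by linarith : (0 : ℝ) ≤ log 2 - 2 / 3)]

lemma mul_logb_two_add_two_le (x : ℝ) (hx : 0 ≤ x) :
    x * logb 2 x + 2 ≤ (3 * x ^ 2 + 26 * x + 32) / 16 := by
  rcases hx.eq_or_lt with rfl | hx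
  · norm_num
  · nlinarith [logb_two_le x hx]

noncomputable def fQuotTerm (n ℓ : ℕ) : ℝ :=
  ℓ * logb 2 ℓ * centralBinom (n - ℓ) + 2 * centralBinom (n - ℓ)

lemma fQuot_eq (n t : ℕ) :
    fQuot n t = ((t + 1) * centralBinom (n - t) + ∑ ℓ ∈ Icc (t + 1) n, fQuotTerm n ℓ) /
      centralBinom n :=
  rfl

lemma fQuotTerm_le {n ℓ : ℕ} {K : ℝ} (hℓ : ℓ ≤ n) (hK : (n : ℝ) + 1 ≤ K * (n - ℓ + 1)) :
    fQuotTerm n ℓ ≤ (3 * ℓ ^ 2 + 26 * ℓ + 32) / 16 * K / 2 ^ ℓ * centralBinom n := by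
  have hlog : 0 ≤ (ℓ : ℝ) * logb 2 ℓ := by
    rcases ℓ.eq_zero_or_pos with rfl | hpos
    · simp
    · exact mul_nonneg ℓ.cast_nonneg (logb_nonneg one_lt_two (by exact_mod_cast hpos))
  have hK0 : 0 ≤ K := by
    have : (ℓ : ℝ) ≤ n := by exact_mod_cast hℓ
    nlinarith
  calc fQuotTerm n ℓ = (ℓ * logb 2 ℓ + 2) * centralBinom (n - ℓ) := by rw [fQuotTerm]; ring
    _ ≤ (3 * ℓ ^ 2 + 26 * ℓ + 32) / 16 * (K / 2 ^ ℓ * centralBinom n) :=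
      mul_le_mul (mul_logb_two_add_two_le ℓ ℓ.cast_nonneg) (centralBinom_sub_le hℓ hK)
        (centralBinom_pos _).le (by positivity)
    _ = (3 * ℓ ^ 2 + 26 * ℓ + 32) / 16 * K / 2 ^ ℓ * centralBinom n := by ring

lemma pow_three_mul_two_pow_le (ℓ : ℕ) (hℓ : 24 ≤ ℓ) : ℓ ^ 3 * 2 ^ ℓ ≤ 3 ^ ℓ := by
  induction ℓ, hℓ using Nat.le_induction with
  | base => norm_num
  | succ ℓ hℓ ih =>
    have : 2 * (ℓ + 1) ^ 3 ≤ 3 * ℓ ^ 3 := by nlinarith [Nat.mul_le_mul_left (ℓ ^ 2) hℓ]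
    calc (ℓ + 1) ^ 3 * 2 ^ (ℓ + 1) = 2 * (ℓ + 1) ^ 3 * 2 ^ ℓ := by ring
      _ ≤ 3 * ℓ ^ 3 * 2 ^ ℓ := Nat.mul_le_mul_right _ this
      _ = 3 * (ℓ ^ 3 * 2 ^ ℓ) := by ring
      _ ≤ 3 * 3 ^ ℓ := Nat.mul_le_mul_left 3 ih
      _ = 3 ^ (ℓ + 1) := by ring

lemma quadratic_mul_succ_div_two_pow_le (ℓ : ℕ) (hℓ : 24 ≤ ℓ) :
    (3 * ℓ ^ 2 + 26 * ℓ + 32) / 16 * ((ℓ : ℝ) + 1) / 2 ^ ℓ ≤ (3 / 4) ^ ℓ := by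
  have hpow : (ℓ : ℝ) ^ 3 * 2 ^ ℓ ≤ 3 ^ ℓ := by exact_mod_cast pow_three_mul_two_pow_le ℓ hℓ
  have hpoly : (3 * ℓ ^ 2 + 26 * ℓ + 32) / 16 * ((ℓ : ℝ) + 1) ≤ ℓ ^ 3 := by
    have : (24 : ℝ) ≤ ℓ := by exact_mod_cast hℓ
    nlinarith
  rw [div_pow, show (4 : ℝ) ^ ℓ = 2 ^ ℓ * 2 ^ ℓ by rw [← mul_pow]; norm_num,
    div_le_div_iff₀ (by positivity) (by positivity)]
  calc (3 * ℓ ^ 2 + 26 * ℓ + 32) / 16 * ((ℓ : ℝ) + 1) * (2 ^ ℓ * 2 ^ ℓ)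
      ≤ ℓ ^ 3 * 2 ^ ℓ * 2 ^ ℓ := by rw [← mul_assoc]; gcongr
    _ ≤ 3 ^ ℓ * 2 ^ ℓ := by gcongr

lemma sum_fQuotTerm_Ioc_five_twentyThree_le (n : ℕ) (hn : 100 ≤ n) :
    ∑ ℓ ∈ Ioc 5 23, fQuotTerm n ℓ ≤ 31 / 40 * centralBinom n := by
  calc _ ≤ ∑ ℓ ∈ Ioc (5 : ℕ) 23,
        (3 * (ℓ : ℝ) ^ 2 + 26 * ℓ + 32) / 16 * (101 / (101 - ℓ)) / 2 ^ ℓ * centralBinom n := by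
        refine sum_le_sum fun ℓ hℓ => fQuotTerm_le (by simp at hℓ; omega) ?_
        have h23 : (ℓ : ℝ) ≤ 23 := by simp at hℓ; exact_mod_cast hℓ.2
        have hn' : (100 : ℝ) ≤ n := by exact_mod_cast hn
        rw [div_mul_eq_mul_div, le_div_iff₀ (by linarith)]
        nlinarith
    _ = (∑ ℓ ∈ Ioc (5 : ℕ) 23,
          (3 * (ℓ : ℝ) ^ 2 + 26 * ℓ + 32) / 16 * (101 / (101 - ℓ)) / 2 ^ ℓ) * centralBinom n := by
        rw [sum_mul]
    _ ≤ 31 / 40 * centralBinom n := by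
        refine mul_le_mul_of_nonneg_right ?_ (centralBinom_pos n).le
        rw [show Ioc 5 23 = Ico 6 24 from rfl, sum_Ico_eq_sum_range]
        norm_num [sum_range_succ]

lemma sum_fQuotTerm_Ioc_twentyThree_le (n : ℕ) :
    ∑ ℓ ∈ Ioc 23 n, fQuotTerm n ℓ ≤ 1 / 200 * centralBinom n := by
  calc _ ≤ ∑ ℓ ∈ Ioc 23 n, (3 / 4 : ℝ) ^ ℓ * centralBinom n := by
        refine sum_le_sum fun ℓ hℓ => ?_
        rw [mem_Ioc] at hℓ
        have hℓn : (ℓ : ℝ) ≤ n := by exact_mod_cast hℓ.2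
        refine (fQuotTerm_le (K := ℓ + 1) hℓ.2 (by nlinarith)).trans ?_
        gcongr
        · exact (centralBinom_pos n).le
        · exact quadratic_mul_succ_div_two_pow_le ℓ hℓ.1
    _ ≤ (3 / 4) ^ 24 / (1 - 3 / 4) * centralBinom n := by
        rw [← sum_mul]
        gcongr
        · exact (centralBinom_pos n).le
        · rw [← Ico_add_one_add_one_eq_Ioc]
          exact geom_sum_Ico_le_of_lt_one (by norm_num) (by norm_num)
    _ ≤ 1 / 200 * centralBinom n :=
        mul_le_mul_of_nonneg_right (by norm_num) (centralBinom_pos n).le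

/-- `f(n,5) < 1` for all `n ≥ 100`. -/
theorem stmt_7 (n : ℕ) (hn : 100 ≤ n) : fQuot n 5 < 1 := by
  have hC := centralBinom_pos n
  have head : centralBinom (n - 5) ≤ 101 / 96 / 2 ^ 5 * centralBinom n := by
    apply centralBinom_sub_le (by omega)
    have : (100 : ℝ) ≤ n := by exact_mod_cast hn
    push_cast; linarith
  rw [fQuot_eq, div_lt_one hC, Icc_add_one_left_eq_Ioc,
    ← sum_Ioc_consecutive _ (show 5 ≤ 23 by norm_num) (show 23 ≤ n by omega)]
  push_cast
  linarith [sum_fQuotTerm_Ioc_five_twentyThree_le n hn, sum_fQuotTerm_Ioc_twentyThree_le n]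
end

section
/- Let n be even and suppose Signgiver has a strategy in the prefix-discrepancy game on [n] guaranteeing that at every time t and for every 1 ≤ j ≤ n, |Σ_{i=1}^{j} x_i^t| ≤ D (so the game value satisfies d(n) ≤ D). Then for d = 2D the function Disc-max-d satisfies E_{n/2}(Disc-max-d) ≤ 3d; that is, its deterministic query complexity is at least n − 6D. -/
/-- A Signgiver strategy in the prefix-discrepancy game on `[n]` (positions
`Fin n`): given the history of play (a list of (position, sign) pairs, most
recent first) and the position just queried by Positioner, it returns a sign. -/
def SgStrategy (n : ℕ) : Type := List (Fin n × ℤ) → Fin n → ℤ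

/-- A valid strategy always answers `+1` or `-1`. -/
def ValidStrategy {n : ℕ} (σ : SgStrategy n) : Prop :=
  ∀ h i, σ h i = 1 ∨ σ h i = -1

/-- The history of play produced by the strategy `σ` against the (chronological,
most recent first) list `qs` of positions queried by Positioner. -/
def playHist {n : ℕ} (σ : SgStrategy n) : List (Fin n) → List (Fin n × ℤ)
  | [] => []
  | q :: qs => (q, σ (playHist σ qs) q) :: playHist σ qs

/-- The value of the board at position `i` given the history `h`: the assigned
sign if `i` has been queried, and `0` otherwise. -/
def boardVal {n : ℕ} (h : List (Fin n × ℤ)) (i : Fin n) : ℤ :=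
  ((h.find? fun p => decide (p.1 = i)).map Prod.snd).getD 0

/-- The signed discrepancy `disc(j) = Σ_{i=1}^{j} x_i` of the prefix `[1,j]`
(positions of index `< j` in the 0-indexed board). -/
def prefixDisc {n : ℕ} (h : List (Fin n × ℤ)) (j : ℕ) : ℤ :=
  ∑ p ∈ Finset.univ.filter (fun p : Fin n => (p : ℕ) < j), boardVal h p

/-- The defining property of `Disc-max-d` for a subset `A ⊆ [n]`:
`| |A ∩ [j]| - j/2 | ≤ d/2` (written `|2·|A ∩ [j]| - j| ≤ d`) for all
`1 ≤ j ≤ n`, where `A ∩ [j]` consists of the elements of `A` of index `< j`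
in the 0-indexed ground set `Fin n`. -/
def DiscMaxProp (n d : ℕ) (A : Finset (Fin n)) : Prop :=
  ∀ j ∈ Finset.Icc 1 n,
    |2 * ((A.filter fun i : Fin n => (i : ℕ) < j).card : ℤ) - (j : ℤ)| ≤ (d : ℤ)

instance (n d : ℕ) (A : Finset (Fin n)) : Decidable (DiscMaxProp n d A) := by
  unfold DiscMaxProp; infer_instance

/-- The Boolean function `Disc-max-d` on subsets `A ⊆ [n]`. -/
def discMaxFun (n d : ℕ) (A : Finset (Fin n)) : Bool := decide (DiscMaxProp n d A)

section Aux

variable {n : ℕ}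

lemma boardVal_cons (q : Fin n) (v : ℤ) (h : List (Fin n × ℤ)) (i : Fin n) :
    boardVal ((q, v) :: h) i = if q = i then v else boardVal h i := by
  unfold boardVal
  rw [List.find?_cons]
  by_cases hqi : q = i <;> simp [hqi]

lemma boardVal_notMem (σ : SgStrategy n) {qs : List (Fin n)} {i : Fin n} (h : i ∉ qs) :
    boardVal (playHist σ qs) i = 0 := by
  induction qs with
  | nil => rfl
  | cons q qs ih =>
      rw [playHist, boardVal_cons]
      simp only [List.mem_cons, not_or] at h
      rw [if_neg (fun hh => h.1 hh.symm), ih h.2]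

lemma boardVal_mem {σ : SgStrategy n} (hv : ValidStrategy σ) {qs : List (Fin n)} {i : Fin n}
    (h : i ∈ qs) :
    boardVal (playHist σ qs) i = 1 ∨ boardVal (playHist σ qs) i = -1 := by
  induction qs with
  | nil => simp at h
  | cons q qs ih =>
      rw [playHist, boardVal_cons]
      by_cases hqi : q = i
      · rw [if_pos hqi]; exact hv _ _
      · rw [if_neg hqi]
        refine ih ?_
        rcases List.mem_cons.1 h with h' | h'
        · exact absurd h'.symm hqi
        · exact h'

lemma boardVal_append (σ : SgStrategy n) (l qs : List (Fin n)) {i : Fin n} (hi : i ∉ l) :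
    boardVal (playHist σ (l ++ qs)) i = boardVal (playHist σ qs) i := by
  induction l with
  | nil => rfl
  | cons a l ih =>
      simp only [List.mem_cons, not_or] at hi
      rw [List.cons_append, playHist, boardVal_cons, if_neg (fun hh => hi.1 hh.symm), ih hi.2]

/-- The walk of a decision tree against the Signgiver adversary. -/
def walk (σ : SgStrategy n) : DecTree n → List (Fin n) → List (Fin n) × Bool
  | .leaf b, qs => (qs, b)
  | .node i t0 t1, qs =>
      let qs' := if i ∈ qs then qs else i :: qs
      if boardVal (playHist σ qs') i = 1 then walk σ t1 qs' else walk σ t0 qs'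

lemma walk_spec {σ : SgStrategy n} (hv : ValidStrategy σ) (T : DecTree n) :
    ∀ qs : List (Fin n), qs.Nodup →
      (∃ l, (walk σ T qs).1 = l ++ qs) ∧ (walk σ T qs).1.Nodup ∧
      (walk σ T qs).1.length ≤ qs.length + T.depth ∧
      ∀ A : Finset (Fin n),
        (∀ i ∈ (walk σ T qs).1,
           (i ∈ A ↔ boardVal (playHist σ (walk σ T qs).1) i = 1)) →
        T.eval A = (walk σ T qs).2 := by
  induction T with
  | leaf b =>
      intro qs hnd
      exact ⟨⟨[], rfl⟩, hnd, by simp [walk, DecTree.depth], fun A _ => rfl⟩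
  | node i t0 t1 ih0 ih1 =>
      intro qs hnd
      set qs' := if i ∈ qs then qs else i :: qs with hqs'
      have hiq : i ∈ qs' := by
        by_cases h : i ∈ qs <;> simp [hqs', h]
      have hnd' : qs'.Nodup := by
        by_cases h : i ∈ qs <;> simp [hqs', h, hnd]
      have hlen' : qs'.length ≤ qs.length + 1 := by
        by_cases h : i ∈ qs <;> simp [hqs', h]
      by_cases hb : boardVal (playHist σ qs') i = 1
      · have hw : walk σ (.node i t0 t1) qs = walk σ t1 qs' := by
          rw [walk]; simp only [← hqs', if_pos hb]
        obtain ⟨⟨l, hl⟩, hnd2, hlen2, heval⟩ := ih1 qs' hnd'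
        rw [hw]
        refine ⟨?_, hnd2, ?_, ?_⟩
        · by_cases h : i ∈ qs
          · exact ⟨l, by rw [hl, hqs', if_pos h]⟩
          · exact ⟨l ++ [i], by rw [hl, hqs', if_neg h]; simp⟩
        · calc (walk σ t1 qs').1.length ≤ qs'.length + t1.depth := hlen2
            _ ≤ qs.length + 1 + t1.depth := by omega
            _ ≤ qs.length + DecTree.depth (.node i t0 t1) := by
                rw [DecTree.depth]; omega
        · intro A hA
          have hiQ : i ∈ (walk σ t1 qs').1 := hl ▸ List.mem_append_right l hiq
          have hil : i ∉ l := by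
            rw [hl] at hnd2
            exact fun h => (List.disjoint_of_nodup_append hnd2) h hiq
          have hbv : boardVal (playHist σ (walk σ t1 qs').1) i = 1 := by
            rw [hl, boardVal_append σ l qs' hil]; exact hb
          have hiA : i ∈ A := (hA i hiQ).2 hbv
          rw [DecTree.eval, if_pos hiA]
          exact heval A hA
      · have hb' : boardVal (playHist σ qs') i = -1 :=
          (boardVal_mem hv hiq).resolve_left hb
        have hw : walk σ (.node i t0 t1) qs = walk σ t0 qs' := by
          rw [walk]; simp only [← hqs', if_neg hb]
        obtain ⟨⟨l, hl⟩, hnd2, hlen2, heval⟩ := ih0 qs' hnd'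
        rw [hw]
        refine ⟨?_, hnd2, ?_, ?_⟩
        · by_cases h : i ∈ qs
          · exact ⟨l, by rw [hl, hqs', if_pos h]⟩
          · exact ⟨l ++ [i], by rw [hl, hqs', if_neg h]; simp⟩
        · calc (walk σ t0 qs').1.length ≤ qs'.length + t0.depth := hlen2
            _ ≤ qs.length + 1 + t0.depth := by omega
            _ ≤ qs.length + DecTree.depth (.node i t0 t1) := by
                rw [DecTree.depth]; omega
        · intro A hA
          have hiQ : i ∈ (walk σ t0 qs').1 := hl ▸ List.mem_append_right l hiq
          have hil : i ∉ l := by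
            rw [hl] at hnd2
            exact fun h => (List.disjoint_of_nodup_append hnd2) h hiq
          have hbv : boardVal (playHist σ (walk σ t0 qs').1) i = -1 := by
            rw [hl, boardVal_append σ l qs' hil]; exact hb'
          have hiA : i ∉ A := fun h => by
            have := (hA i hiQ).1 h
            rw [hbv] at this; norm_num at this
          rw [DecTree.eval, if_neg hiA]
          exact heval A hA

lemma filter_lt_card {n : ℕ} {j : ℕ} (hj : j ≤ n) :
    ((Finset.univ : Finset (Fin n)).filter fun i : Fin n => (i : ℕ) < j).card = j := by
  have h := Finset.card_bij'
    (fun (i : Fin n) (_ : i ∈ (Finset.univ : Finset (Fin n)).filter fun i : Fin n => (i : ℕ) < j) => (i : ℕ))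
    (fun u hu => (⟨u, lt_of_lt_of_le (Finset.mem_range.1 hu) hj⟩ : Fin n))
    (fun a ha => Finset.mem_range.2 (Finset.mem_filter.1 ha).2)
    (fun a ha => by simp [Finset.mem_filter, Finset.mem_range.1 ha])
    (fun a ha => rfl) (fun a ha => rfl)
  rw [h, Finset.card_range]
lemma sum_pm {n : ℕ} (y : Fin n → ℤ) (hy : ∀ i, y i = 1 ∨ y i = -1) {j : ℕ} (hj : j ≤ n) :
    ∑ i ∈ Finset.univ.filter (fun i : Fin n => (i : ℕ) < j), y i
      = 2 * ((((Finset.univ : Finset (Fin n)).filter (fun i => y i = 1)).filter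
          fun i : Fin n => (i : ℕ) < j).card : ℤ) - (j : ℤ) := by
  set P := Finset.univ.filter (fun i : Fin n => (i : ℕ) < j) with hP
  have hsplit := Finset.sum_filter_add_sum_filter_not P (fun i => y i = 1) y
  have h1 : ∑ i ∈ P.filter (fun i => y i = 1), y i
      = ((P.filter (fun i => y i = 1)).card : ℤ) := by
    rw [Finset.sum_congr rfl (fun i hi => (Finset.mem_filter.1 hi).2)]; simp
  have h2 : ∑ i ∈ P.filter (fun i => ¬ y i = 1), y i
      = -((P.filter (fun i => ¬ y i = 1)).card : ℤ) := by
    rw [Finset.sum_congr rfl (fun i hi => ((hy i).resolve_left (Finset.mem_filter.1 hi).2))]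
    simp
  have hc : (P.filter (fun i => y i = 1)).card + (P.filter (fun i => ¬ y i = 1)).card = j := by
    rw [Finset.card_filter_add_card_filter_not, hP, filter_lt_card hj]
  have hcomm : (((Finset.univ : Finset (Fin n)).filter (fun i => y i = 1)).filter
      fun i : Fin n => (i : ℕ) < j) = P.filter (fun i => y i = 1) := by
    rw [hP, Finset.filter_comm]
  rw [hcomm, ← hsplit, h1, h2]
  omega

lemma downset_eq {m : ℕ} (S : Finset (Fin m))
    (hS : ∀ k k' : Fin m, k ≤ k' → k' ∈ S → k ∈ S) :
    S = Finset.univ.filter fun k : Fin m => (k : ℕ) < S.card := by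
  ext k
  simp only [Finset.mem_filter, Finset.mem_univ, true_and]
  constructor
  · intro hk
    have hsub : (Finset.univ.filter fun k' : Fin m => (k' : ℕ) < (k : ℕ) + 1) ⊆ S := by
      intro k' hk'
      have h1 : (k' : ℕ) < (k : ℕ) + 1 := (Finset.mem_filter.1 hk').2
      exact hS k' k (by omega) hk
    have hcard := Finset.card_le_card hsub
    rw [filter_lt_card (by omega : (k : ℕ) + 1 ≤ m)] at hcard
    omega
  · intro hk
    by_contra hkS
    have hsub : S ⊆ Finset.univ.filter fun k' : Fin m => (k' : ℕ) < (k : ℕ) := by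
      intro k' hk'
      simp only [Finset.mem_filter, Finset.mem_univ, true_and]
      by_contra hcon
      exact hkS (hS k k' (by omega) hk')
    have hcard := Finset.card_le_card hsub
    rw [filter_lt_card (le_of_lt k.isLt)] at hcard
    omega

lemma sum_fin_lt {m r : ℕ} (hr : r ≤ m) (c : ℕ → ℤ) :
    ∑ k ∈ Finset.univ.filter (fun k : Fin m => (k : ℕ) < r), c (k : ℕ)
      = ∑ u ∈ Finset.range r, c u :=
  Finset.sum_bij' (fun (k : Fin m) (_ : k ∈ Finset.univ.filter (fun k : Fin m => (k : ℕ) < r)) => (k : ℕ))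
    (fun u hu => (⟨u, lt_of_lt_of_le (Finset.mem_range.1 hu) hr⟩ : Fin m))
    (fun a ha => Finset.mem_range.2 (Finset.mem_filter.1 ha).2)
    (fun a ha => by simp [Finset.mem_filter, Finset.mem_range.1 ha])
    (fun a ha => rfl) (fun a ha => rfl) (fun a ha => rfl)

section FreeSum

variable {n : ℕ} (free : Finset (Fin n))

/-- The set of indices `k` (positions within `free`) whose element lies below `j`. -/
def Kset (j : ℕ) : Finset (Fin free.card) :=
  Finset.univ.filter fun k => (((free.orderIsoOfFin rfl) k : Fin n) : ℕ) < j

lemma Kset_downset (j : ℕ) :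
    Kset free j = Finset.univ.filter fun k : Fin free.card => (k : ℕ) < (Kset free j).card := by
  apply downset_eq
  intro k k' hkk' hk'
  simp only [Kset, Finset.mem_filter, Finset.mem_univ, true_and] at hk' ⊢
  have hle : (free.orderIsoOfFin rfl) k ≤ (free.orderIsoOfFin rfl) k' :=
    (free.orderIsoOfFin rfl).le_iff_le.2 hkk'
  have h2 : (((free.orderIsoOfFin rfl) k : Fin n) : ℕ) ≤ (((free.orderIsoOfFin rfl) k' : Fin n) : ℕ) := by
    exact_mod_cast hle
  omega

lemma Kset_card (j : ℕ) :
    (Kset free j).card = (free.filter fun i : Fin n => (i : ℕ) < j).card :=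
  Finset.card_bij'
    (fun (k : Fin free.card) (_ : k ∈ Kset free j) => ((free.orderIsoOfFin rfl) k : Fin n))
    (fun i hi => (free.orderIsoOfFin rfl).symm ⟨i, (Finset.mem_filter.1 hi).1⟩)
    (fun k hk => by
      simp only [Kset, Finset.mem_filter, Finset.mem_univ, true_and] at hk
      exact Finset.mem_filter.2 ⟨((free.orderIsoOfFin rfl) k).2, hk⟩)
    (fun i hi => by
      simp only [Kset, Finset.mem_filter, Finset.mem_univ, true_and]
      rw [OrderIso.apply_symm_apply]
      exact (Finset.mem_filter.1 hi).2)
    (fun k hk => (free.orderIsoOfFin rfl).symm_apply_apply k)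
    (fun i hi => by simp)

lemma sum_kset (c : ℕ → ℤ) (j : ℕ) :
    ∑ i ∈ free.filter (fun i : Fin n => (i : ℕ) < j),
        (fun i => if h : i ∈ free then
          c (((free.orderIsoOfFin rfl).symm ⟨i, h⟩ : Fin free.card) : ℕ) else 0) i
      = ∑ k ∈ Kset free j, c (k : ℕ) :=
  Finset.sum_bij'
    (fun (i : Fin n) (hi : i ∈ free.filter (fun i : Fin n => (i : ℕ) < j)) =>
      (free.orderIsoOfFin rfl).symm ⟨i, (Finset.mem_filter.1 hi).1⟩)
    (fun k (_ : k ∈ Kset free j) => ((free.orderIsoOfFin rfl) k : Fin n))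
    (fun i hi => by
      simp only [Kset, Finset.mem_filter, Finset.mem_univ, true_and]
      rw [OrderIso.apply_symm_apply]
      exact (Finset.mem_filter.1 hi).2)
    (fun k hk => by
      simp only [Kset, Finset.mem_filter, Finset.mem_univ, true_and] at hk
      exact Finset.mem_filter.2 ⟨((free.orderIsoOfFin rfl) k).2, hk⟩)
    (fun i hi => by simp)
    (fun k hk => (free.orderIsoOfFin rfl).symm_apply_apply k)
    (fun i hi => by
      rw [dif_pos (Finset.mem_filter.1 hi).1])

/-- Key decomposition: the prefix sum of the completed board splits into the
fixed part and an explicit sum of the first values of `c`. -/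
lemma sum_prefix_decomp (x : Fin n → ℤ) (hx : ∀ i ∈ free, x i = 0) (c : ℕ → ℤ) (j : ℕ) :
    ∑ i ∈ Finset.univ.filter (fun i : Fin n => (i : ℕ) < j),
        (if h : i ∈ free then
          c (((free.orderIsoOfFin rfl).symm ⟨i, h⟩ : Fin free.card) : ℕ) else x i)
      = (∑ i ∈ Finset.univ.filter (fun i : Fin n => (i : ℕ) < j), x i)
        + ∑ u ∈ Finset.range ((free.filter fun i : Fin n => (i : ℕ) < j).card), c u := by
  classical
  set P := Finset.univ.filter (fun i : Fin n => (i : ℕ) < j) with hP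
  set y := fun i : Fin n => if h : i ∈ free then
      c (((free.orderIsoOfFin rfl).symm ⟨i, h⟩ : Fin free.card) : ℕ) else x i with hy
  have hsplit := Finset.sum_filter_add_sum_filter_not P (fun i => i ∈ free) y
  have hxsplit := Finset.sum_filter_add_sum_filter_not P (fun i => i ∈ free) x
  have hx0 : ∑ i ∈ P.filter (fun i => i ∈ free), x i = 0 :=
    Finset.sum_eq_zero fun i hi => hx i (Finset.mem_filter.1 hi).2
  have hyx : ∑ i ∈ P.filter (fun i => ¬ i ∈ free), y i
      = ∑ i ∈ P.filter (fun i => ¬ i ∈ free), x i := by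
    apply Finset.sum_congr rfl
    intro i hi
    rw [hy]; exact dif_neg (Finset.mem_filter.1 hi).2
  have hPfree : P.filter (fun i => i ∈ free) = free.filter (fun i : Fin n => (i : ℕ) < j) := by
    rw [hP]; ext i; simp [Finset.mem_filter, and_comm]
  have hyfree : ∑ i ∈ P.filter (fun i => i ∈ free), y i
      = ∑ u ∈ Finset.range ((free.filter fun i : Fin n => (i : ℕ) < j).card), c u := by
    rw [hPfree]
    have h1 : ∑ i ∈ free.filter (fun i : Fin n => (i : ℕ) < j), y i
        = ∑ i ∈ free.filter (fun i : Fin n => (i : ℕ) < j),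
            (fun i => if h : i ∈ free then
              c (((free.orderIsoOfFin rfl).symm ⟨i, h⟩ : Fin free.card) : ℕ) else 0) i := by
      apply Finset.sum_congr rfl
      intro i hi
      have hif : i ∈ free := (Finset.mem_filter.1 hi).1
      rw [hy]; simp only [dif_pos hif]
    rw [h1]
    rw [sum_kset free c j]
    rw [Kset_downset free j]
    rw [← Kset_card free j]
    exact sum_fin_lt (by simpa using Finset.card_le_univ (Kset free j)) c
  rw [← hsplit, ← hxsplit, hx0, hyfree]
  rw [hyx]
  ring

end FreeSum

/-- The complete decision tree querying all positions in `qs`. -/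
def fullTree {n : ℕ} (g : Finset (Fin n) → Bool) : List (Fin n) → Finset (Fin n) → DecTree n
  | [], acc => .leaf (g acc)
  | q :: qs, acc => .node q (fullTree g qs acc) (fullTree g qs (insert q acc))

lemma fullTree_depth {n : ℕ} (g : Finset (Fin n) → Bool) (qs : List (Fin n)) :
    ∀ acc, (fullTree g qs acc).depth = qs.length := by
  induction qs with
  | nil => intro acc; rfl
  | cons q qs ih => intro acc; rw [fullTree, DecTree.depth, ih, ih]; simp

lemma fullTree_eval {n : ℕ} (g : Finset (Fin n) → Bool) (qs : List (Fin n))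
    (A : Finset (Fin n)) :
    ∀ acc, (fullTree g qs acc).eval A = g (acc ∪ A.filter (fun i => i ∈ qs)) := by
  induction qs with
  | nil => intro acc; simp [fullTree, DecTree.eval]
  | cons q qs ih =>
      intro acc
      rw [fullTree, DecTree.eval]
      by_cases hq : q ∈ A
      · rw [if_pos hq, ih]
        congr 1
        ext i
        simp only [Finset.mem_union, Finset.mem_insert, Finset.mem_filter, List.mem_cons]
        constructor
        · rintro (⟨rfl | hi⟩ | ⟨hiA, hiq⟩)
          · exact Or.inr ⟨hq, Or.inl rfl⟩
          · exact Or.inl hi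
          · exact Or.inr ⟨hiA, Or.inr hiq⟩
        · rintro (hi | ⟨hiA, rfl | hiq⟩)
          · exact Or.inl (Or.inr hi)
          · exact Or.inl (Or.inl rfl)
          · exact Or.inr ⟨hiA, hiq⟩
      · rw [if_neg hq, ih]
        congr 1
        ext i
        simp only [Finset.mem_union, Finset.mem_filter, List.mem_cons]
        constructor
        · rintro (hi | ⟨hiA, hiq⟩)
          · exact Or.inl hi
          · exact Or.inr ⟨hiA, Or.inr hiq⟩
        · rintro (hi | ⟨hiA, rfl | hiq⟩)
          · exact Or.inl hi
          · exact absurd hiA hq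
          · exact Or.inr ⟨hiA, hiq⟩

/-- The sign sequence used for the legal (discrepancy-respecting) completion. -/
def cseq (s : ℤ) (F : ℕ) (u : ℕ) : ℤ :=
  if u < F then -s else if (u - F) % 2 = 0 then s else -s

lemma cseq_sum (s : ℤ) (F k : ℕ) :
    ∑ u ∈ Finset.range k, cseq s F u
      = -s * ((min k F : ℕ) : ℤ) + s * (((k - F) % 2 : ℕ) : ℤ) := by
  induction k with
  | zero => simp [Nat.zero_sub]
  | succ k ih =>
      rw [Finset.sum_range_succ, ih, cseq]
      by_cases hk : k < F
      · rw [if_pos hk]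
        have h1 : min k F = k := by omega
        have h2 : min (k + 1) F = k + 1 := by omega
        have h3 : (k - F) % 2 = 0 := by omega
        have h4 : (k + 1 - F) % 2 = 0 := by omega
        rw [h1, h2, h3, h4]; push_cast; ring
      · rw [if_neg hk]
        have h1 : min k F = F := by omega
        have h2 : min (k + 1) F = F := by omega
        by_cases hp : (k - F) % 2 = 0
        · rw [if_pos hp]
          have h4 : (k + 1 - F) % 2 = 1 := by omega
          rw [h1, h2, hp, h4]; push_cast; ring
        · rw [if_neg hp]
          have h3 : (k - F) % 2 = 1 := by omega
          have h4 : (k + 1 - F) % 2 = 0 := by omega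
          rw [h1, h2, h3, h4]; push_cast; ring

/-- The sign sequence used for the illegal (discrepancy-violating) completion. -/
def cseq2 (s : ℤ) (a : ℕ) (u : ℕ) : ℤ := if u < a then -s else s

lemma cseq2_sum (s : ℤ) (a k : ℕ) :
    ∑ u ∈ Finset.range k, cseq2 s a u
      = -s * ((min k a : ℕ) : ℤ) + s * ((k : ℤ) - ((min k a : ℕ) : ℤ)) := by
  induction k with
  | zero => simp
  | succ k ih =>
      rw [Finset.sum_range_succ, ih, cseq2]
      by_cases hk : k < a
      · rw [if_pos hk]
        have h1 : min k a = k := by omega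
        have h2 : min (k + 1) a = k + 1 := by omega
        rw [h1, h2]; push_cast; ring
      · rw [if_neg hk]
        have h1 : min k a = a := by omega
        have h2 : min (k + 1) a = a := by omega
        rw [h1, h2]; push_cast; ring

end Aux

/-- If Signgiver has a strategy in the prefix-discrepancy game on `[n]` (`n`
even) keeping every prefix discrepancy, at every time, at most `D` (so
`d(n) ≤ D`), then for `d = 2D` the function `Disc-max-d` on the middle slice
satisfies `E_{n/2}(Disc-max-d) ≤ 3d`, i.e. its deterministic query complexity
is at least `n - 6D`. -/
theorem stmt_15 (n D : ℕ) (hn : Even n)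
    (hσ : ∃ σ : SgStrategy n, ValidStrategy σ ∧
      ∀ qs : List (Fin n), qs.Nodup →
        ∀ j, 1 ≤ j → j ≤ n → |prefixDisc (playHist σ qs) j| ≤ (D : ℤ)) :
    n - Dquery n (n / 2) (fun A => discMaxFun n (2 * D) A.val) ≤ 3 * (2 * D) ∧
    n - 6 * D ≤ Dquery n (n / 2) (fun A => discMaxFun n (2 * D) A.val) := by
  obtain ⟨σ, hv, hdisc⟩ := hσ
  suffices h : n ≤ Dquery n (n / 2) (fun A => discMaxFun n (2 * D) A.val) + 6 * D by
    constructor <;> omega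
  by_contra hcon
  push_neg at hcon
  have hn1 : 1 ≤ n := by omega
  rcases Nat.eq_zero_or_pos D with hD0 | hD1
  -- the case D = 0 is impossible: any first move violates the discrepancy bound
  · subst hD0
    set i0 : Fin n := ⟨0, by omega⟩ with hi0
    have hb := hdisc [i0] (List.nodup_singleton i0) 1 le_rfl hn1
    have hfilter : (Finset.univ.filter fun p : Fin n => (p : ℕ) < 1) = {i0} := by
      ext i
      simp only [Finset.mem_filter, Finset.mem_univ, true_and, Finset.mem_singleton]
      constructor
      · intro hi
        exact Fin.ext (show (i : ℕ) = (0 : ℕ) by omega)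
      · intro hi
        rw [hi]
        exact Nat.zero_lt_one
    have hval : prefixDisc (playHist σ [i0]) 1 = σ [] i0 := by
      rw [prefixDisc, hfilter, Finset.sum_singleton]
      show boardVal ((i0, σ (playHist σ []) i0) :: playHist σ []) i0 = σ [] i0
      rw [boardVal_cons, if_pos rfl]
      rfl
    rw [hval] at hb
    rcases hv [] i0 with h1 | h1 <;> rw [h1] at hb <;> norm_num at hb
  -- main case: D ≥ 1
  · set f : Slice n (n / 2) → Bool := fun A => discMaxFun n (2 * D) A.val with hf
    have hScomp : Computes (fullTree (discMaxFun n (2 * D)) (List.finRange n) ∅) f := by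
      intro A
      rw [fullTree_eval, hf]
      simp only []
      congr 1
      rw [Finset.empty_union]
      exact Finset.filter_true_of_mem fun i _ => List.mem_finRange i
    have hSne : Dquery n (n / 2) f ∈ {d : ℕ | ∃ T : DecTree n, T.depth ≤ d ∧ Computes T f} :=
      Nat.sInf_mem ⟨n, fullTree (discMaxFun n (2 * D)) (List.finRange n) ∅,
        by rw [fullTree_depth]; simp, hScomp⟩
    obtain ⟨T, hTd, hTc⟩ := hSne
    obtain ⟨-, hQnd, hQlen, heval⟩ := walk_spec hv T [] List.nodup_nil
    set Q := (walk σ T []).1 with hQ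
    set b := (walk σ T []).2 with hbdef
    set x : Fin n → ℤ := fun i => boardVal (playHist σ Q) i with hx
    set Qs : Finset (Fin n) := Q.toFinset with hQs
    set free : Finset (Fin n) := Finset.univ \ Qs with hfree
    have hfx : ∀ i ∈ free, x i = 0 := by
      intro i hi
      rw [hfree, Finset.mem_sdiff] at hi
      exact boardVal_notMem σ fun h => hi.2 (List.mem_toFinset.2 h)
    have hxQ : ∀ i ∈ Q, x i = 1 ∨ x i = -1 := fun i hi => boardVal_mem hv hi
    have hQscard : Qs.card = Q.length := List.toFinset_card_of_nodup hQnd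
    set m := free.card with hm
    have hmval : m + Q.length = n := by
      have hsub : Qs.card ≤ (Finset.univ : Finset (Fin n)).card := Finset.card_le_univ Qs
      rw [hm, hfree, Finset.card_sdiff_of_subset (Finset.subset_univ Qs)]
      simp only [Finset.card_univ, Fintype.card_fin] at hsub ⊢
      omega
    have hQsmall : Q.length + 6 * D < n := by
      have h1 := hQlen
      simp only [List.length_nil, Nat.zero_add] at h1
      omega
    have hmge : 6 * D + 1 ≤ m := by omega
    have hpre : ∀ j, 1 ≤ j → j ≤ n → |prefixDisc (playHist σ Q) j| ≤ (D : ℤ) :=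
      fun j h1 h2 => hdisc Q hQnd j h1 h2
    have hpdj : ∀ j : ℕ, ∑ i ∈ Finset.univ.filter (fun i : Fin n => (i : ℕ) < j), x i
        = prefixDisc (playHist σ Q) j := fun j => rfl
    set f0 : ℤ := prefixDisc (playHist σ Q) n with hf0
    have hf0D : |f0| ≤ (D : ℤ) := hpre n hn1 le_rfl
    have hPn : (Finset.univ.filter fun i : Fin n => (i : ℕ) < n) = Finset.univ :=
      Finset.filter_true_of_mem fun i _ => i.isLt
    have hf0sum : f0 = ∑ i ∈ Qs, x i := by
      rw [hf0, ← hpdj n, hPn]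
      exact (Finset.sum_subset (Finset.subset_univ Qs) fun i _ hi =>
        boardVal_notMem σ fun h => hi (List.mem_toFinset.2 h)).symm
    have hpar : (2 : ℤ) ∣ (f0 + Q.length) := by
      have h1 : ∑ i ∈ Qs, (x i + 1) = f0 + Q.length := by
        rw [Finset.sum_add_distrib, ← hf0sum, Finset.sum_const, hQscard]
        push_cast; ring
      rw [← h1]
      apply Finset.dvd_sum
      intro i hi
      rcases hxQ i (List.mem_toFinset.1 hi) with h | h <;> rw [h] <;> norm_num
    set s : ℤ := if 0 ≤ f0 then 1 else -1 with hs
    have hs1 : s = 1 ∨ s = -1 := by rw [hs]; split_ifs <;> simp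
    set F : ℕ := f0.natAbs with hF
    have hsF : f0 = s * (F : ℤ) := by
      rw [hs, hF]
      split_ifs with h
      · rw [one_mul]; omega
      · rw [neg_one_mul]; omega
    have hFD : (F : ℤ) ≤ (D : ℤ) := by
      rw [abs_le] at hf0D; rw [hF]; omega
    have hFm : F ≤ m := by
      have h1 : (F : ℕ) ≤ D := by exact_mod_cast hFD
      omega
    obtain ⟨w, hw⟩ := hn
    have hparm : (m - F) % 2 = 0 := by
      obtain ⟨r, hr⟩ := hpar
      rcases hs1 with h | h <;> rw [h] at hsF <;> omega
    have hdec := fun (c : ℕ → ℤ) (j : ℕ) => sum_prefix_decomp free x hfx c j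
    have hkj : (free.filter fun i : Fin n => (i : ℕ) < n).card = m := by
      rw [Finset.filter_true_of_mem fun i _ => i.isLt]
    have hnotfree : ∀ i ∈ Q, i ∉ free := by
      intro i hi hif
      rw [hfree, Finset.mem_sdiff] at hif
      exact hif.2 (List.mem_toFinset.2 hi)
    have hfreemem : ∀ i : Fin n, i ∉ free → i ∈ Q := by
      intro i h
      rw [hfree, Finset.mem_sdiff] at h
      push_neg at h
      exact List.mem_toFinset.1 (h (Finset.mem_univ i))
    -- ===== the legal completion =====
    set c1 : ℕ → ℤ := cseq s F with hc1
    set y1 : Fin n → ℤ := fun i => if h : i ∈ free then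
        c1 (((free.orderIsoOfFin rfl).symm ⟨i, h⟩ : Fin free.card) : ℕ) else x i with hy1
    have hy1pm : ∀ i, y1 i = 1 ∨ y1 i = -1 := by
      intro i
      simp only [hy1]
      by_cases h : i ∈ free
      · rw [dif_pos h, hc1, cseq]
        rcases hs1 with hss | hss <;> rw [hss] <;> split_ifs <;> simp
      · rw [dif_neg h]
        exact hxQ i (hfreemem i h)
    have hsum1 : ∀ j : ℕ, ∑ i ∈ Finset.univ.filter (fun i : Fin n => (i : ℕ) < j), y1 i
        = prefixDisc (playHist σ Q) j
          + ∑ u ∈ Finset.range ((free.filter fun i : Fin n => (i : ℕ) < j).card), c1 u := by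
      intro j
      rw [← hpdj j]
      exact hdec c1 j
    have hbound1 : ∀ j, 1 ≤ j → j ≤ n →
        |∑ i ∈ Finset.univ.filter (fun i : Fin n => (i : ℕ) < j), y1 i| ≤ (2 * D : ℤ) := by
      intro j h1 h2
      rw [hsum1 j, hc1, cseq_sum]
      have hpd := hpre j h1 h2
      rw [abs_le] at hpd ⊢
      rcases hs1 with hss | hss <;> rw [hss] <;> constructor <;> push_cast <;> omega
    have htot1 : ∑ i ∈ Finset.univ.filter (fun i : Fin n => (i : ℕ) < n), y1 i = 0 := by
      rw [hsum1 n, hkj, hc1, cseq_sum, ← hf0]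
      have h1 : min m F = F := by omega
      rw [h1, hparm, hsF]
      push_cast; ring
    set A1 : Finset (Fin n) := Finset.univ.filter (fun i => y1 i = 1) with hA1
    have hcard1 : A1.card = n / 2 := by
      have hthis := sum_pm y1 hy1pm (le_refl n)
      rw [htot1, ← hA1] at hthis
      rw [Finset.filter_true_of_mem (fun i (_ : i ∈ A1) => i.isLt)] at hthis
      omega
    have hprop1 : DiscMaxProp n (2 * D) A1 := by
      intro j hj
      rw [Finset.mem_Icc] at hj
      have hthis := hbound1 j hj.1 hj.2
      rw [sum_pm y1 hy1pm hj.2, ← hA1] at hthis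
      exact_mod_cast hthis
    -- ===== the violating completion =====
    set a : ℕ := (m + F) / 2 with ha
    have h2a : 2 * a = m + F := by omega
    have haD : 3 * D + 1 ≤ a := by omega
    have ham : a ≤ m := by omega
    set c2 : ℕ → ℤ := cseq2 s a with hc2
    set y2 : Fin n → ℤ := fun i => if h : i ∈ free then
        c2 (((free.orderIsoOfFin rfl).symm ⟨i, h⟩ : Fin free.card) : ℕ) else x i with hy2
    have hy2pm : ∀ i, y2 i = 1 ∨ y2 i = -1 := by
      intro i
      simp only [hy2]
      by_cases h : i ∈ free
      · rw [dif_pos h, hc2, cseq2]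
        rcases hs1 with hss | hss <;> rw [hss] <;> split_ifs <;> simp
      · rw [dif_neg h]
        exact hxQ i (hfreemem i h)
    have hsum2 : ∀ j : ℕ, ∑ i ∈ Finset.univ.filter (fun i : Fin n => (i : ℕ) < j), y2 i
        = prefixDisc (playHist σ Q) j
          + ∑ u ∈ Finset.range ((free.filter fun i : Fin n => (i : ℕ) < j).card), c2 u := by
      intro j
      rw [← hpdj j]
      exact hdec c2 j
    have htot2 : ∑ i ∈ Finset.univ.filter (fun i : Fin n => (i : ℕ) < n), y2 i = 0 := by
      rw [hsum2 n, hkj, hc2, cseq2_sum, ← hf0]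
      have h1 : min m a = a := by omega
      rw [h1, hsF]
      have h2 : ((m : ℕ) : ℤ) - ((a : ℕ) : ℤ) = ((a : ℕ) : ℤ) - ((F : ℕ) : ℤ) := by push_cast; omega
      rw [h2]
      push_cast; ring
    set A2 : Finset (Fin n) := Finset.univ.filter (fun i => y2 i = 1) with hA2
    have hcard2 : A2.card = n / 2 := by
      have hthis := sum_pm y2 hy2pm (le_refl n)
      rw [htot2, ← hA2] at hthis
      rw [Finset.filter_true_of_mem (fun i (_ : i ∈ A2) => i.isLt)] at hthis
      omega
    set kstar : Fin free.card := ⟨a - 1, by omega⟩ with hkstar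
    have hksval : (kstar : ℕ) = a - 1 := rfl
    set jstar : ℕ := (((free.orderIsoOfFin rfl) kstar : Fin n) : ℕ) + 1 with hjstar
    have hjstar1 : 1 ≤ jstar := by omega
    have hjstarn : jstar ≤ n := ((free.orderIsoOfFin rfl) kstar : Fin n).isLt
    have hKa : (free.filter fun i : Fin n => (i : ℕ) < jstar).card = a := by
      rw [← Kset_card free jstar]
      have hKeq : Kset free jstar = Finset.univ.filter fun k : Fin free.card => (k : ℕ) < a := by
        ext k
        simp only [Kset, Finset.mem_filter, Finset.mem_univ, true_and]
        constructor
        · intro hk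
          by_contra hcon2
          have hge : kstar < k := by
            rw [Fin.lt_def, hksval]; omega
          have hle2 := (free.orderIsoOfFin rfl).lt_iff_lt.2 hge
          have hcc : (((free.orderIsoOfFin rfl) kstar : Fin n) : ℕ)
              < (((free.orderIsoOfFin rfl) k : Fin n) : ℕ) := by exact_mod_cast hle2
          omega
        · intro hk
          have hle : k ≤ kstar := by
            rw [Fin.le_def, hksval]; omega
          have hle2 := (free.orderIsoOfFin rfl).le_iff_le.2 hle
          have hcc : (((free.orderIsoOfFin rfl) k : Fin n) : ℕ)
              ≤ (((free.orderIsoOfFin rfl) kstar : Fin n) : ℕ) := by exact_mod_cast hle2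
          omega
      rw [hKeq, filter_lt_card ham]
    have hviol : ¬ DiscMaxProp n (2 * D) A2 := by
      intro hprop
      have hineq := hprop jstar (Finset.mem_Icc.2 ⟨hjstar1, hjstarn⟩)
      have hsumj := sum_pm y2 hy2pm hjstarn
      rw [← hA2] at hsumj
      rw [hsum2 jstar, hKa, hc2, cseq2_sum, min_self] at hsumj
      have hpd := hpre jstar hjstar1 hjstarn
      rw [abs_le] at hpd hineq
      rw [← hsumj] at hineq
      rcases hs1 with hss | hss <;> rw [hss] at hineq <;> push_cast at hineq <;> omega
    -- ===== contradiction =====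
    have hcons1 : ∀ i ∈ Q, (i ∈ A1 ↔ boardVal (playHist σ Q) i = 1) := by
      intro i hi
      have hif : i ∉ free := hnotfree i hi
      rw [hA1, Finset.mem_filter]
      simp only [hy1]
      rw [dif_neg hif]
      exact ⟨fun h => h.2, fun h => ⟨Finset.mem_univ i, h⟩⟩
    have hcons2 : ∀ i ∈ Q, (i ∈ A2 ↔ boardVal (playHist σ Q) i = 1) := by
      intro i hi
      have hif : i ∉ free := hnotfree i hi
      rw [hA2, Finset.mem_filter]
      simp only [hy2]
      rw [dif_neg hif]
      exact ⟨fun h => h.2, fun h => ⟨Finset.mem_univ i, h⟩⟩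
    have hT1 : T.eval A1 = true :=
      (hTc ⟨A1, hcard1⟩).trans
        (show f ⟨A1, hcard1⟩ = true from decide_eq_true hprop1)
    have hT2 : T.eval A2 = false :=
      (hTc ⟨A2, hcard2⟩).trans
        (show f ⟨A2, hcard2⟩ = false from decide_eq_false hviol)
    have e3 := (heval A1 hcons1).symm.trans hT1
    have e4 := (heval A2 hcons2).symm.trans hT2
    rw [e3] at e4
    exact Bool.noConfusion e4
end
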